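/- Let f : ℝ^d → [0,∞) be a lower semi-continuous log-concave function of finite integral with the origin in its support, let ψ* = -log L_∞ f, and let M = min_{ℝ^d} ψ*. Then for any s with the origin interior to supp f_s and s + M > 0, supp L_s f_s ⊆ (1/(M+s)) · closure(supp L_∞ f), where f_s(x) = [max(1 + (log f(x))/s, 0)]^s. -/

import Mathlib

open MeasureTheory Set Pointwise

variable {d : ℕ}

/-- The polar (log-conjugate) transform. -/
noncomputable def polarT (f : EuclideanSpace ℝ (Fin d) → ℝ)
    (y : EuclideanSpace ℝ (Fin d)) : ℝ :=
  ⨅ x : {x : EuclideanSpace ℝ (Fin d) // 0 < f x},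
    Real.exp (-(inner ℝ (x : EuclideanSpace ℝ (Fin d)) y : ℝ)) / f x

/-- The `s`-polar transform. -/
noncomputable def sPolar (s : ℝ) (f : EuclideanSpace ℝ (Fin d) → ℝ)
    (y : EuclideanSpace ℝ (Fin d)) : ℝ :=
  ⨅ x : {x : EuclideanSpace ℝ (Fin d) // 0 < f x},
    max (1 - (inner ℝ (x : EuclideanSpace ℝ (Fin d)) y : ℝ)) 0 ^ s / f x

/-- The `1/s`-concave approximation `f_s = [max(1 + log f / s, 0)]^s` of `f`. -/
noncomputable def sApprox (s : ℝ) (f : EuclideanSpace ℝ (Fin d) → ℝ)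
    (x : EuclideanSpace ℝ (Fin d)) : ℝ :=
  max (1 + Real.log (f x) / s) 0 ^ s

/-!
Write `ψ = -log f`, a convex function on `{f > 0}`. If `L_s f_s (y) ≠ 0`, then `⟪x, y⟫ < 1`
wherever `ψ x < s`. For `0 < a < s - ψ 0`, shrinking a point `x` with `ψ x > ψ 0 + a` towards
the origin to the level `ψ 0 + a` and using convexity gives `a ⟪x, y⟫ ≤ ψ x - ψ 0`, while on the
sublevel set `a ⟪x, y⟫ - ψ x` is controlled by the lower bound of `ψ` that integrability forces.
So `ψ*(a y) < ∞`, i.e. `a y ∈ supp L_∞ f`. It remains to see `s + M ≤ s - ψ 0`, that is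
`min ψ* ≤ -ψ 0`, which follows from the existence of `ε`-subgradients of `ψ` at `0`
(Hahn–Banach applied to the epigraph).
-/

open Filter Topology
open scoped InnerProductSpace

abbrev LogConcave {E : Type*} [AddCommGroup E] [Module ℝ E] (f : E → ℝ) : Prop :=
  ∀ x y : E, ∀ t ∈ Icc (0 : ℝ) 1, f x ^ (1 - t) * f y ^ t ≤ f ((1 - t) • x + t • y)

section General

variable {E : Type*}

theorem LogConcave.convexOn_neg_log [AddCommGroup E] [Module ℝ E] {f : E → ℝ}
    (hf : LogConcave f) : ConvexOn ℝ {x | 0 < f x} fun x => -Real.log (f x) := by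
  have key : ∀ ⦃x⦄, 0 < f x → ∀ ⦃y⦄, 0 < f y → ∀ ⦃a b : ℝ⦄, 0 ≤ a → 0 ≤ b → a + b = 1 →
      0 < f x ^ a * f y ^ b ∧ f x ^ a * f y ^ b ≤ f (a • x + b • y) := by
    intro x hx y hy a b ha hb hab
    obtain rfl : a = 1 - b := by linarith
    exact ⟨mul_pos (Real.rpow_pos_of_pos hx _) (Real.rpow_pos_of_pos hy _),
      hf x y b ⟨hb, by linarith⟩⟩
  refine ⟨fun x hx y hy a b ha hb hab => ?_, fun x hx y hy a b ha hb hab => ?_⟩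
  · obtain ⟨hpos, hle⟩ := key hx hy ha hb hab
    exact hpos.trans_le hle
  · obtain ⟨hpos, hle⟩ := key hx hy ha hb hab
    have hlog := Real.log_le_log hpos hle
    rw [Real.log_mul (Real.rpow_pos_of_pos hx _).ne' (Real.rpow_pos_of_pos hy _).ne',
      Real.log_rpow hx, Real.log_rpow hy] at hlog
    simp only [smul_eq_mul]
    linarith

theorem LogConcave.sqrt_mul_le [AddCommGroup E] [Module ℝ E] {f : E → ℝ} (hf : LogConcave f)
    {x : E} (hx : 0 ≤ f x) (y : E) :
    √(f x * f y) ≤ f ((1 / 2 : ℝ) • x + (1 / 2 : ℝ) • y) := by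
  have h := hf x y (1 / 2) ⟨by norm_num, by norm_num⟩
  rw [show (1 : ℝ) - 1 / 2 = 1 / 2 by norm_num] at h
  rwa [Real.sqrt_mul hx, Real.sqrt_eq_rpow, Real.sqrt_eq_rpow]

/-- Compare `∫ f` with the integral over a small ball around the midpoint of `x₀` and `x`, on
which `f ≥ √(f x₀ / 2 * f x)`. -/
theorem LogConcave.bddAbove_of_integrable [NormedAddCommGroup E] [NormedSpace ℝ E]
    [MeasurableSpace E] [BorelSpace E] [FiniteDimensional ℝ E] {μ : Measure E}
    [μ.IsAddHaarMeasure] {f : E → ℝ} (hf : LogConcave f) (hf₀ : ∀ x, 0 ≤ f x)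
    (hint : Integrable f μ) {x₀ : E} (hlsc : LowerSemicontinuousAt f x₀) (hx₀ : 0 < f x₀) :
    BddAbove (range f) := by
  obtain ⟨r, hr, hball⟩ := Metric.eventually_nhds_iff_ball.1 (hlsc (f x₀ / 2) (by linarith))
  set V := μ.real (Metric.ball (0 : E) (r / 2))
  have hV : 0 < V :=
    ENNReal.toReal_pos (Metric.measure_ball_pos μ _ (by positivity)).ne'
      measure_ball_lt_top.ne
  refine ⟨((∫ z, f z ∂μ) / V) ^ 2 / (f x₀ / 2), ?_⟩
  rintro _ ⟨x, rfl⟩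
  set c : E := (1 / 2 : ℝ) • (x₀ + x)
  have hlow : ∀ z ∈ Metric.ball c (r / 2), √(f x₀ / 2 * f x) ≤ f z := by
    intro z hz
    have hz' : (2 : ℝ) • z - x ∈ Metric.ball x₀ r := by
      rw [Metric.mem_ball, dist_eq_norm] at hz ⊢
      have : (2 : ℝ) • z - x - x₀ = (2 : ℝ) • (z - c) := by simp only [c]; module
      rw [this, norm_smul, Real.norm_two]
      linarith
    have hmid : (1 / 2 : ℝ) • ((2 : ℝ) • z - x) + (1 / 2 : ℝ) • x = z := by module
    calc √(f x₀ / 2 * f x) ≤ √(f ((2 : ℝ) • z - x) * f x) :=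
          Real.sqrt_le_sqrt (mul_le_mul_of_nonneg_right (hball _ hz').le (hf₀ x))
      _ ≤ f ((1 / 2 : ℝ) • ((2 : ℝ) • z - x) + (1 / 2 : ℝ) • x) := hf.sqrt_mul_le (hf₀ _) _
      _ = f z := by rw [hmid]
  have hint_ball : √(f x₀ / 2 * f x) * V ≤ ∫ z, f z ∂μ :=
    calc √(f x₀ / 2 * f x) * V = √(f x₀ / 2 * f x) * μ.real (Metric.ball c (r / 2)) := by
          rw [Measure.addHaar_real_ball_center]
      _ ≤ ∫ z in Metric.ball c (r / 2), f z ∂μ :=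
          setIntegral_ge_of_const_le_real measurableSet_ball measure_ball_lt_top.ne hlow
            hint.integrableOn
      _ ≤ ∫ z, f z ∂μ := setIntegral_le_integral hint (Eventually.of_forall hf₀)
  have hsq : √(f x₀ / 2 * f x) ≤ (∫ z, f z ∂μ) / V := (le_div_iff₀ hV).2 hint_ball
  rw [le_div_iff₀ (by linarith), mul_comm]
  exact (Real.sqrt_le_iff.1 hsq).2

theorem upperSemicontinuousAt_neg_log [TopologicalSpace E] {f : E → ℝ} {x : E}
    (hf : LowerSemicontinuousAt f x) (hx : 0 < f x) :
    UpperSemicontinuousAt (fun z => -Real.log (f z)) x := by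
  intro b hb
  have hexp : Real.exp (-b) < f x := by
    rw [← Real.exp_log hx]
    exact Real.exp_lt_exp.2 (by linarith)
  filter_upwards [hf _ hexp] with z hz
  have := (Real.lt_log_iff_exp_lt ((Real.exp_pos _).trans hz)).2 hz
  linarith

/-- The point `(x₀, ψ x₀ - ε)` lies outside the closure of the epigraph; separate it from the
epigraph by Hahn–Banach. -/
theorem ConvexOn.exists_le_add_of_upperSemicontinuousAt [NormedAddCommGroup E]
    [NormedSpace ℝ E] {D : Set E} {ψ : E → ℝ} {x₀ : E} (hψ : ConvexOn ℝ D ψ) (hD : D ∈ 𝓝 x₀)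
    (hu : UpperSemicontinuousAt ψ x₀) {ε : ℝ} (hε : 0 < ε) :
    ∃ ℓ : StrongDual ℝ E, ∀ x ∈ D, ℓ (x - x₀) ≤ ψ x - ψ x₀ + ε := by
  set S := {p : E × ℝ | p.1 ∈ D ∧ ψ p.1 ≤ p.2}
  have hnear : ∀ᶠ x in 𝓝 x₀, x ∈ D ∧ ψ x < ψ x₀ + ε / 2 :=
    Eventually.and hD (hu _ (by linarith))
  have hrefl : Tendsto (fun x => (2 : ℝ) • x₀ - x) (𝓝 x₀) (𝓝 x₀) := by
    have := (tendsto_const_nhds (x := (2 : ℝ) • x₀)).sub (tendsto_id (x := 𝓝 x₀))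
    simpa only [two_smul, id, add_sub_cancel_right] using this
  have hnot : (x₀, ψ x₀ - ε) ∉ closure S := by
    rw [mem_closure_iff_nhds]
    push Not
    refine ⟨_, prod_mem_nhds (hnear.and (hrefl.eventually hnear))
      (Iio_mem_nhds (by linarith : ψ x₀ - ε < ψ x₀ - ε / 2)), ?_⟩
    rw [eq_empty_iff_forall_notMem]
    rintro ⟨x, r⟩ ⟨⟨⟨⟨-, -⟩, hx', hψx'⟩, hr⟩, hx, hψx⟩
    have hmid := hψ.2 hx' hx (by norm_num : (0 : ℝ) ≤ 1 / 2) (by norm_num : (0 : ℝ) ≤ 1 / 2)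
      (by norm_num)
    rw [show (1 / 2 : ℝ) • ((2 : ℝ) • x₀ - x) + (1 / 2 : ℝ) • x = x₀ by module] at hmid
    simp only [smul_eq_mul, mem_Iio] at hmid hr hψx'
    linarith
  obtain ⟨g, u, hgS, hgx₀⟩ :=
    geometric_hahn_banach_closed_point hψ.convex_epigraph.closure isClosed_closure hnot
  have hsplit : ∀ x t, g (x, t) = g (x, 0) + t * g (0, 1) := by
    intro x t
    rw [← smul_eq_mul, ← map_smul, ← map_add]
    simp
  have hlt : ∀ x ∈ D, g (x, 0) + ψ x * g (0, 1) < g (x₀, 0) + (ψ x₀ - ε) * g (0, 1) :=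
    fun x hx => hsplit x _ ▸ hsplit x₀ _ ▸ (hgS _ (subset_closure ⟨hx, le_rfl⟩)).trans hgx₀
  have hα : g (0, 1) < 0 := by nlinarith [hlt x₀ (mem_of_mem_nhds hD)]
  refine ⟨(-g (0, 1))⁻¹ • g.comp (ContinuousLinearMap.inl ℝ E ℝ), fun x hx => ?_⟩
  have hsub : g (x - x₀, 0) = g (x, 0) - g (x₀, 0) := by
    rw [← map_sub, Prod.mk_sub_mk, sub_zero]
  simp only [smul_apply, ContinuousLinearMap.comp_apply,
    ContinuousLinearMap.inl_apply, smul_eq_mul, hsub]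
  rw [inv_mul_le_iff₀ (by linarith)]
  nlinarith [hlt x hx]

/-- If `ψ x > ψ 0 + a`, then `t • x` with `t = a / (ψ x - ψ 0)` lies in the sublevel set by
convexity. -/
theorem ConvexOn.mul_apply_sub_le_max [AddCommGroup E] [Module ℝ E] {D : Set E} {ψ : E → ℝ}
    (hψ : ConvexOn ℝ D ψ) (h0 : 0 ∈ D) (ℓ : E →ₗ[ℝ] ℝ) {a L : ℝ} (ha : 0 < a)
    (hL : ∀ x ∈ D, -L ≤ ψ x) (hℓ : ∀ x ∈ D, ψ x ≤ ψ 0 + a → ℓ x ≤ 1) :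
    ∀ x ∈ D, a * ℓ x - ψ x ≤ max (a + L) (-ψ 0) := by
  intro x hx
  by_cases hlev : ψ x ≤ ψ 0 + a
  · exact le_max_of_le_left (by nlinarith [hℓ x hx hlev, hL x hx])
  push Not at hlev
  set t := a / (ψ x - ψ 0)
  have ht : 0 < t := div_pos ha (by linarith)
  have ht1 : t ≤ 1 := (div_le_one (by linarith)).2 (by linarith)
  have hta : t * (ψ x - ψ 0) = a := div_mul_cancel₀ _ (by linarith)
  have hconv := hψ.2 h0 hx (by linarith : 0 ≤ 1 - t) ht.le (by ring)
  simp only [smul_zero, zero_add, smul_eq_mul] at hconv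
  have hℓtx := hℓ _ (hψ.1.smul_mem_of_zero_mem h0 hx ⟨ht.le, ht1⟩) (by linarith)
  rw [map_smul, smul_eq_mul] at hℓtx
  have hshrink : a * ℓ x ≤ ψ x - ψ 0 := by nlinarith
  exact le_max_of_le_right (by linarith)

theorem smul_mem_closure_of_forall_lt [TopologicalSpace E] [AddCommGroup E] [Module ℝ E]
    [ContinuousSMul ℝ E] {S : Set E} {y : E} {c : ℝ} (hc : 0 < c)
    (h : ∀ a ∈ Ioo 0 c, a • y ∈ S) : c • y ∈ closure S :=
  map_mem_closure (f := fun a : ℝ => a • y) (continuous_id.smul continuous_const)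
    (by rw [closure_Ioo hc.ne]; exact right_mem_Icc.2 hc.le) h

end General

section Polar

variable {f : EuclideanSpace ℝ (Fin d) → ℝ}

theorem exp_neg_le_polarT {x₀ y : EuclideanSpace ℝ (Fin d)} (hx₀ : 0 < f x₀) {B : ℝ}
    (hB : ∀ x, 0 < f x → ⟪x, y⟫_ℝ + Real.log (f x) ≤ B) : Real.exp (-B) ≤ polarT f y := by
  have : Nonempty {x // 0 < f x} := ⟨⟨x₀, hx₀⟩⟩
  refine le_ciInf fun ⟨x, hx⟩ => ?_
  rw [le_div_iff₀ hx, ← Real.exp_log hx, ← Real.exp_add]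
  exact Real.exp_le_exp.2 (by linarith [hB x hx])

theorem exists_neg_log_polarT_le (hf : LogConcave f) (hlsc : LowerSemicontinuousAt f 0)
    (h0 : 0 < f 0) {ε : ℝ} (hε : 0 < ε) :
    ∃ w, -Real.log (polarT f w) ≤ Real.log (f 0) + ε := by
  obtain ⟨ℓ, hℓ⟩ := hf.convexOn_neg_log.exists_le_add_of_upperSemicontinuousAt (hlsc 0 h0)
    (upperSemicontinuousAt_neg_log hlsc h0) hε
  refine ⟨(InnerProductSpace.toDual ℝ _).symm ℓ, ?_⟩
  have hpolar := exp_neg_le_polarT h0 (B := Real.log (f 0) + ε) fun x hx => by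
    rw [real_inner_comm, InnerProductSpace.toDual_symm_apply]
    have hℓx := hℓ x hx
    rw [sub_zero] at hℓx
    linarith
  have hlog := Real.log_le_log (Real.exp_pos _) hpolar
  rw [Real.log_exp] at hlog
  linarith

theorem sPolar_eq_zero_of_one_le_inner {s : ℝ} (hs : s ≠ 0) {x y : EuclideanSpace ℝ (Fin d)}
    (hx : 0 < f x) (hxy : 1 ≤ ⟪x, y⟫_ℝ) : sPolar s f y = 0 := by
  have hterm : ∀ z : {z // 0 < f z},
      0 ≤ max (1 - ⟪(z : EuclideanSpace ℝ (Fin d)), y⟫_ℝ) 0 ^ s / f z :=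
    fun z => div_nonneg (Real.rpow_nonneg (le_max_right _ _) _) z.2.le
  refine le_antisymm ?_ (Real.iInf_nonneg hterm)
  calc sPolar s f y ≤ max (1 - ⟪x, y⟫_ℝ) 0 ^ s / f x :=
        ciInf_le ⟨0, forall_mem_range.2 hterm⟩ ⟨x, hx⟩
    _ = 0 := by rw [max_eq_right (by linarith), Real.zero_rpow hs, zero_div]

theorem sApprox_nonneg (s : ℝ) (x : EuclideanSpace ℝ (Fin d)) : 0 ≤ sApprox s f x :=
  Real.rpow_nonneg (le_max_right _ _) _

theorem sApprox_pos_iff {s : ℝ} (hs : 0 < s) {x : EuclideanSpace ℝ (Fin d)} :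
    0 < sApprox s f x ↔ -Real.log (f x) < s := by
  have hbase : 0 < 1 + Real.log (f x) / s ↔ -Real.log (f x) < s := by
    rw [← div_lt_one hs, neg_div]
    constructor <;> intro h <;> linarith
  rw [sApprox, ← hbase]
  constructor
  · intro h
    by_contra hle
    rw [max_eq_right (not_lt.1 hle), Real.zero_rpow hs.ne'] at h
    exact h.false
  · intro h
    rw [max_eq_left h.le]
    exact Real.rpow_pos_of_pos h _

end Polar

/-- If `M = min ψ*` where `ψ* = -log L_∞ f`, and `s + M > 0` with `0` interior to
`supp f_s`, then `supp L_s f_s ⊆ (M+s)⁻¹ · closure (supp L_∞ f)`. -/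
theorem support_sPolar_subset (d : ℕ)
    (f : EuclideanSpace ℝ (Fin d) → ℝ) (hf : ∀ x, 0 ≤ f x)
    (hlsc : LowerSemicontinuous f)
    (hlc : ∀ x y : EuclideanSpace ℝ (Fin d), ∀ t ∈ Set.Icc (0 : ℝ) 1,
      f x ^ (1 - t) * f y ^ t ≤ f ((1 - t) • x + t • y))
    (hint : Integrable f)
    (h0 : 0 < f 0)
    (M : ℝ) (hM : IsLeast (Set.range fun y => -Real.log (polarT f y)) M)
    (s : ℝ)
    (h0s : (0 : EuclideanSpace ℝ (Fin d)) ∈ interior (Function.support (sApprox s f)))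
    (hsM : 0 < s + M) :
    Function.support (sPolar s (sApprox s f)) ⊆
      (M + s)⁻¹ • closure (Function.support (polarT f)) := by
  replace hlc : LogConcave f := hlc
  intro y hy
  rw [mem_inv_smul_set_iff₀ (by linarith : M + s ≠ 0)]
  by_cases hK : ∀ w, polarT f w ≠ 0
  · simp [Function.support, hK]
  push Not at hK
  obtain ⟨w₀, hw₀⟩ := hK
  -- `Real.log 0 = 0`, so a zero of `polarT f` puts `0` in the range whose least element is `M`.
  have hs : 0 < s := by linarith [(show M ≤ 0 by simpa [hw₀] using hM.2 ⟨w₀, rfl⟩)]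
  have hψ₀ : -Real.log (f 0) < s :=
    (sApprox_pos_iff hs).1 ((sApprox_nonneg s 0).lt_of_ne' (interior_subset h0s))
  have hMψ : M ≤ Real.log (f 0) := le_of_forall_pos_le_add fun ε hε =>
    let ⟨w, hw⟩ := exists_neg_log_polarT_le hlc (hlsc 0) h0 hε
    (hM.2 ⟨w, rfl⟩).trans hw
  obtain ⟨C, hC⟩ := hlc.bddAbove_of_integrable hf hint (hlsc 0) h0
  have hpolar : ∀ x, 0 < f x → -Real.log (f x) < s → ⟪y, x⟫_ℝ < 1 := fun x hx hxs =>
    not_le.1 fun h => hy (sPolar_eq_zero_of_one_le_inner hs.ne' ((sApprox_pos_iff hs).2 hxs)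
      (real_inner_comm x y ▸ h))
  refine smul_mem_closure_of_forall_lt (by linarith) fun a ⟨ha, haM⟩ => ?_
  have hbound := hlc.convexOn_neg_log.mul_apply_sub_le_max h0 (innerₗ _ y) ha
    (L := Real.log C) (fun x hx => by linarith [Real.log_le_log hx (hC ⟨x, rfl⟩)])
    (fun x hx hxa => (hpolar x hx (by linarith)).le)
  refine ((Real.exp_pos _).trans_le (exp_neg_le_polarT h0 (B := max (a + Real.log C)
    (- -Real.log (f 0))) fun x hx => ?_)).ne'
  rw [real_inner_smul_right, real_inner_comm, ← sub_neg_eq_add]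
  exact hbound x hx
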